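/- Let μ be an invariant probability measure of a flow ψ^t on a compact metric space M such that μ(γ) = 1 for some single periodic orbit γ. If ν is another ergodic invariant measure with (μ × ν)({(p,q) : the orbits of p and q are disjoint}) = 0, and ν-almost every point is recurrent, then ν is also supported on γ. -/

import Mathlib

open MeasureTheory Filter Topology Set

/-! Since `μ(γ) > 0` and the fibre of `R` over `μ`-almost every `p` is `ν`-null, some `p ∈ γ`
has `ν {q | (p, q) ∈ R} = 0`. Outside this null set the orbit of `q` meets the orbit of `p`,
which is `γ`, so `q ∈ γ`. -/

section FlowOrbit

variable {M : Type*} {ψ : ℝ → M → M}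

theorem range_flow_subset_of_mem (hψadd : ∀ s t : ℝ, ψ (s + t) = ψ s ∘ ψ t) {p p₀ : M}
    (hp : p ∈ range fun t : ℝ => ψ t p₀) :
    (range fun t : ℝ => ψ t p) ⊆ range fun t : ℝ => ψ t p₀ := by
  obtain ⟨s, rfl⟩ := hp
  rintro _ ⟨t, rfl⟩
  exact ⟨t + s, by simp only [hψadd, Function.comp_apply]⟩

theorem mem_range_flow_of_inter_nonempty (hψ0 : ψ 0 = id)
    (hψadd : ∀ s t : ℝ, ψ (s + t) = ψ s ∘ ψ t) {p q : M}
    (h : ((range fun t : ℝ => ψ t p) ∩ range fun t : ℝ => ψ t q).Nonempty) :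
    q ∈ range fun t : ℝ => ψ t p := by
  obtain ⟨_, ⟨s, hs⟩, ⟨t, rfl⟩⟩ := h
  refine ⟨-t + s, ?_⟩
  calc ψ (-t + s) p = ψ (-t + t) q := by simp only [hψadd, Function.comp_apply, hs]
    _ = q := by rw [neg_add_cancel, hψ0, id]

end FlowOrbit

theorem exists_mem_measure_prodMk_preimage_eq_zero {α β : Type*} [MeasurableSpace α]
    [MeasurableSpace β] {μ : Measure α} {ν : Measure β} [SFinite ν] {s : Set α}
    {R : Set (α × β)} (hs : μ s ≠ 0) (hR : μ.prod ν R = 0) :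
    ∃ p ∈ s, ν (Prod.mk p ⁻¹' R) = 0 := by
  have hnull : μ {p | ν (Prod.mk p ⁻¹' R) ≠ 0} = 0 :=
    ae_iff.mp (Measure.measure_ae_null_of_prod_null hR)
  obtain ⟨p, hps, hp⟩ := nonempty_of_measure_ne_zero (by rwa [measure_sdiff_null hnull])
  exact ⟨p, hps, not_not.mp hp⟩

theorem stmt_16_general {M : Type*}
    [MeasurableSpace M]
    (ψ : ℝ → M → M)
    (hψ0 : ψ 0 = id) (hψadd : ∀ s t : ℝ, ψ (s + t) = ψ s ∘ ψ t)
    (p₀ : M)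
    (γ : Set M) (hγ : γ = Set.range fun t : ℝ => ψ t p₀)
    (μ ν : Measure M) [IsProbabilityMeasure ν]
    (hμγ : μ γ = 1)
    (R : Set (M × M))
    (hR : R = {x : M × M | (Set.range fun t : ℝ => ψ t x.1) ∩ (Set.range fun t : ℝ => ψ t x.2) = ∅})
    (hRnull : (μ.prod ν) R = 0) :
    ν γ = 1 := by
  obtain ⟨p, hpγ, hp⟩ :=
    exists_mem_measure_prodMk_preimage_eq_zero (by simp [hμγ] : μ γ ≠ 0) hRnull
  have hcompl : γᶜ ⊆ Prod.mk p ⁻¹' R := by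
    intro q hq
    subst hγ
    rw [hR]
    by_contra hne
    exact hq (range_flow_subset_of_mem hψadd hpγ
      (mem_range_flow_of_inter_nonempty hψ0 hψadd (nonempty_iff_ne_empty.mpr hne)))
  rw [measure_congr (ae_eq_univ.mpr (measure_mono_null hcompl hp)), measure_univ]

/-- Let `ψ^t` be a flow on a compact metric space `M`, `γ` a periodic
orbit, and `μ` an invariant probability measure with `μ(γ) = 1`.  If `ν` is another ergodic
invariant probability measure such that the set `R = {(p,q) : ψ^ℝ(p) ∩ ψ^ℝ(q) = ∅}` of pairs
with disjoint orbits has `(μ × ν)(R) = 0`, and `ν`-almost every point is recurrent, then `ν`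
is also supported on `γ` (i.e. `ν(γ) = 1`). -/
theorem stmt_16 {M : Type*} [MetricSpace M] [CompactSpace M]
    [MeasurableSpace M] [BorelSpace M]
    (ψ : ℝ → M → M) (hcont : Continuous fun q : ℝ × M => ψ q.1 q.2)
    (hψ0 : ψ 0 = id) (hψadd : ∀ s t : ℝ, ψ (s + t) = ψ s ∘ ψ t)
    (p₀ : M) (S : ℝ) (hS : 0 < S) (hper : ψ S p₀ = p₀)
    (γ : Set M) (hγ : γ = Set.range fun t : ℝ => ψ t p₀) (hγmeas : MeasurableSet γ)
    (μ ν : Measure M) [IsProbabilityMeasure μ] [IsProbabilityMeasure ν]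
    (hμinv : ∀ t : ℝ, μ.map (ψ t) = μ) (hνinv : ∀ t : ℝ, ν.map (ψ t) = ν)
    (hνerg : ∀ A : Set M, MeasurableSet A → (∀ t : ℝ, ψ t ⁻¹' A = A) → ν A = 0 ∨ ν A = 1)
    (hμγ : μ γ = 1)
    (R : Set (M × M))
    (hR : R = {x : M × M | (Set.range fun t : ℝ => ψ t x.1) ∩ (Set.range fun t : ℝ => ψ t x.2) = ∅})
    (hRmeas : MeasurableSet R)
    (hRnull : (μ.prod ν) R = 0)
    (hrec : ∀ᵐ q ∂ν, ∃ u : ℕ → ℝ, Tendsto u atTop atTop ∧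
      Tendsto (fun n => ψ (u n) q) atTop (𝓝 q)) :
    ν γ = 1 :=
  stmt_16_general ψ hψ0 hψadd p₀ γ hγ μ ν hμγ R hR hRnull
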